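/- For all simple types σ, τ, every strongly monotonic functional F of type σ⇒τ and every x in the interpretation of σ: cost_τ(F(x)) ≥ cost_σ(x). -/
import Mathlib


/-- Simple types over a set of sorts `S`. -/
inductive Ty (S : Type) : Type where
  | base : S → Ty S
  | arrow : Ty S → Ty S → Ty S

/-- The interpretation of types: a base sort `ι` is interpreted as the set of
tuples `ℕ^{K ι + 1}` (so tuples always have length ≥ 1), and an arrow type as
the full function space (membership in the strongly monotonic functionals is
the predicate `Mem` below). -/
def Interp {S : Type} (K : S → ℕ) : Ty S → Type
  | .base ι => Fin (K ι + 1) → ℕ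
  | .arrow σ τ => Interp K σ → Interp K τ

mutual
/-- Membership in the set of strongly monotonic functionals of type `σ`. -/
def Mem {S : Type} (K : S → ℕ) : (σ : Ty S) → Interp K σ → Prop
  | .base _, _ => True
  | .arrow σ τ, F =>
      (∀ x, Mem K σ x → Mem K τ (F x)) ∧
      (∀ x y, Mem K σ x → Mem K σ y → TGt K σ x y → TGt K τ (F x) (F y)) ∧
      (∀ x y, Mem K σ x → Mem K σ y → TGe K σ x y → TGe K τ (F x) (F y))

/-- The hereditary strict order `⊐` on the interpretation of a type. -/
def TGt {S : Type} (K : S → ℕ) : (σ : Ty S) → Interp K σ → Interp K σ → Prop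
  | .base _, x, y => (∀ i, y i ≤ x i) ∧ y 0 < x 0
  | .arrow σ τ, F, G => (∃ x, Mem K σ x) ∧ ∀ x, Mem K σ x → TGt K τ (F x) (G x)

/-- The hereditary weak order `⊒` on the interpretation of a type. -/
def TGe {S : Type} (K : S → ℕ) : (σ : Ty S) → Interp K σ → Interp K σ → Prop
  | .base _, x, y => ∀ i, y i ≤ x i
  | .arrow σ τ, F, G => ∀ x, Mem K σ x → TGe K τ (F x) (G x)
end

/-- `addcost σ c x` hereditarily adds `c` to the cost (first) component. -/
def addcost {S : Type} (K : S → ℕ) : (σ : Ty S) → ℕ → Interp K σ → Interp K σ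
  | .base _, c, x => fun i => if i = 0 then c + x i else x i
  | .arrow σ τ, c, F => fun d => addcost K τ c (F d)

mutual
/-- The hereditarily minimal element `0_σ`. -/
def nul {S : Type} (K : S → ℕ) : (σ : Ty S) → Interp K σ
  | .base _ => fun _ => 0
  | .arrow σ τ => fun d => addcost K τ (cost K σ d) (nul K τ)

/-- The hereditary cost extraction `cost_σ`. -/
def cost {S : Type} (K : S → ℕ) : (σ : Ty S) → Interp K σ → ℕ
  | .base _, x => x 0
  | .arrow σ τ, F => cost K τ (F (nul K σ))
end

theorem addcost_addcost {S : Type} (K : S → ℕ) : ∀ (σ : Ty S) (c d : ℕ) (x : Interp K σ),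
    addcost K σ c (addcost K σ d x) = addcost K σ (c + d) x
  | .base ι, c, d, x => by
      funext i
      by_cases h : i = 0 <;> simp [addcost, h] <;> omega
  | .arrow σ τ, c, d, F => by
      funext a
      exact addcost_addcost K τ c d (F a)

theorem addcost_zero {S : Type} (K : S → ℕ) : ∀ (σ : Ty S) (x : Interp K σ), addcost K σ 0 x = x
  | .base ι, x => by funext i; by_cases h : i = 0 <;> simp [addcost, h]
  | .arrow σ τ, F => by funext a; exact addcost_zero K τ (F a)

theorem tge_refl {S : Type} (K : S → ℕ) : ∀ (σ : Ty S) (x : Interp K σ), TGe K σ x x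
  | .base ι, x => by simp [TGe]
  | .arrow σ τ, F => by
      simp only [TGe]
      exact fun a _ => tge_refl K τ (F a)

theorem tge_trans {S : Type} (K : S → ℕ) : ∀ (σ : Ty S) (x y z : Interp K σ),
    TGe K σ x y → TGe K σ y z → TGe K σ x z
  | .base ι, x, y, z, h1, h2 => by
      simp only [TGe] at *
      exact fun i => le_trans (h2 i) (h1 i)
  | .arrow σ τ, x, y, z, h1, h2 => by
      simp only [TGe] at *
      exact fun a ha => tge_trans K τ _ _ _ (h1 a ha) (h2 a ha)

mutual

theorem mem_nul {S : Type} (K : S → ℕ) : ∀ (σ : Ty S), Mem K σ (nul K σ)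
  | .base ι => by simp [Mem]
  | .arrow σ τ => by
      simp only [Mem, nul]
      refine ⟨fun d _ => mem_addcost K τ _ _ (mem_nul K τ), ?_, ?_⟩
      · intro d e hd he hde
        exact tgt_addcost_lt K τ _ _ _ _ (tgt_cost K σ d e hde) (tge_refl K τ _)
      · intro d e hd he hde
        exact tge_addcost K τ _ _ _ _ (tge_cost K σ d e hde) (tge_refl K τ _)

theorem mem_addcost {S : Type} (K : S → ℕ) : ∀ (σ : Ty S) (c : ℕ) (x : Interp K σ),
    Mem K σ x → Mem K σ (addcost K σ c x)
  | .base ι, c, x, _ => by simp [Mem]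
  | .arrow σ τ, c, F, hF => by
      simp only [Mem, addcost] at *
      refine ⟨fun a ha => mem_addcost K τ c _ (hF.1 a ha), ?_, ?_⟩
      · intro a b ha hb hab
        exact tgt_addcost_le K τ c c _ _ le_rfl (hF.2.1 a b ha hb hab)
      · intro a b ha hb hab
        exact tge_addcost K τ c c _ _ le_rfl (hF.2.2 a b ha hb hab)

theorem tge_cost {S : Type} (K : S → ℕ) : ∀ (σ : Ty S) (x y : Interp K σ),
    TGe K σ x y → cost K σ y ≤ cost K σ x
  | .base ι, x, y, h => by
      simp only [TGe] at h; simpa [cost] using h 0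
  | .arrow σ τ, x, y, h => by
      simp only [TGe] at h
      simp only [cost]
      exact tge_cost K τ _ _ (h _ (mem_nul K σ))

theorem tgt_cost {S : Type} (K : S → ℕ) : ∀ (σ : Ty S) (x y : Interp K σ),
    TGt K σ x y → cost K σ y < cost K σ x
  | .base ι, x, y, h => by
      simp only [TGt] at h; simpa [cost] using h.2
  | .arrow σ τ, x, y, h => by
      simp only [TGt] at h
      simp only [cost]
      exact tgt_cost K τ _ _ (h.2 _ (mem_nul K σ))

theorem tge_addcost {S : Type} (K : S → ℕ) : ∀ (σ : Ty S) (c c' : ℕ) (x y : Interp K σ),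
    c' ≤ c → TGe K σ x y → TGe K σ (addcost K σ c x) (addcost K σ c' y)
  | .base ι, c, c', x, y, hc, h => by
      simp only [TGe, addcost] at *
      intro i
      by_cases hi : i = 0 <;> simp [hi]
      · have := h 0; omega
      · exact h i
  | .arrow σ τ, c, c', x, y, hc, h => by
      simp only [TGe, addcost] at *
      exact fun a ha => tge_addcost K τ c c' _ _ hc (h a ha)

theorem tgt_addcost_lt {S : Type} (K : S → ℕ) : ∀ (σ : Ty S) (c c' : ℕ) (x y : Interp K σ),
    c' < c → TGe K σ x y → TGt K σ (addcost K σ c x) (addcost K σ c' y)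
  | .base ι, c, c', x, y, hc, h => by
      simp only [TGe] at h
      simp only [TGt, addcost]
      constructor
      · intro i
        by_cases hi : i = 0 <;> simp [hi]
        · have := h 0; omega
        · exact h i
      · simp; have := h 0; omega
  | .arrow σ τ, c, c', x, y, hc, h => by
      simp only [TGe] at h
      simp only [TGt, addcost]
      exact ⟨⟨nul K σ, mem_nul K σ⟩,
        fun a ha => tgt_addcost_lt K τ c c' _ _ hc (h a ha)⟩

theorem tgt_addcost_le {S : Type} (K : S → ℕ) : ∀ (σ : Ty S) (c c' : ℕ) (x y : Interp K σ),
    c' ≤ c → TGt K σ x y → TGt K σ (addcost K σ c x) (addcost K σ c' y)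
  | .base ι, c, c', x, y, hc, h => by
      simp only [TGt] at h ⊢
      simp only [addcost]
      constructor
      · intro i
        by_cases hi : i = 0 <;> simp [hi]
        · have := h.1 0; have := h.2; omega
        · exact h.1 i
      · simp; have := h.2; omega
  | .arrow σ τ, c, c', x, y, hc, h => by
      simp only [TGt] at h ⊢
      simp only [addcost]
      exact ⟨h.1, fun a ha => tgt_addcost_le K τ c c' _ _ hc (h.2 a ha)⟩

end

/-- Auxiliary: the key additivity bound, assuming the `tge_self_addcost`
property for the domain type. -/
theorem cost_add_aux {S : Type} (K : S → ℕ) (σ τ : Ty S)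
    (h6 : ∀ x, Mem K σ x → TGe K σ x (addcost K σ (cost K σ x) (nul K σ)))
    (F : Interp K (Ty.arrow σ τ)) (hF : Mem K (Ty.arrow σ τ) F)
    (x : Interp K σ) (hx : Mem K σ x) :
    cost K (Ty.arrow σ τ) F + cost K σ x ≤ cost K τ (F x) := by
  simp only [Mem] at hF
  have hstep : ∀ c : ℕ, c + cost K τ (F (nul K σ)) ≤ cost K τ (F (addcost K σ c (nul K σ))) := by
    intro c
    induction c with
    | zero => simp [addcost_zero]
    | succ n ih =>
        have hgt : TGt K τ (F (addcost K σ (n+1) (nul K σ))) (F (addcost K σ n (nul K σ))) :=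
          hF.2.1 _ _ (mem_addcost K σ _ _ (mem_nul K σ)) (mem_addcost K σ _ _ (mem_nul K σ))
            (tgt_addcost_lt K σ (n+1) n _ _ (by omega) (tge_refl K σ _))
        have := tgt_cost K τ _ _ hgt
        omega
  have h1 : TGe K τ (F x) (F (addcost K σ (cost K σ x) (nul K σ))) :=
    hF.2.2 _ _ hx (mem_addcost K σ _ _ (mem_nul K σ)) (h6 x hx)
  have h2 := tge_cost K τ _ _ h1
  have h3 := hstep (cost K σ x)
  simp only [cost]
  omega

theorem tge_self_addcost {S : Type} (K : S → ℕ) : ∀ (σ : Ty S) (x : Interp K σ), Mem K σ x →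
    TGe K σ x (addcost K σ (cost K σ x) (nul K σ))
  | .base ι, x, _ => by
      simp only [TGe, addcost, nul, cost]
      intro i
      by_cases hi : i = 0 <;> simp [hi]
  | .arrow σ τ, x, hx => by
      simp only [TGe]
      intro a ha
      have key := cost_add_aux K σ τ (tge_self_addcost K σ) x hx a ha
      have h1 := tge_self_addcost K τ (x a) (by
        have h := hx; simp only [Mem] at h; exact h.1 a ha)
      refine tge_trans K τ _ _ _ h1 ?_
      show TGe K τ _ (addcost K τ (cost K (Ty.arrow σ τ) x) (nul K (Ty.arrow σ τ) a))
      simp only [nul, addcost_addcost]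
      exact tge_addcost K τ _ _ _ _ (by simpa [cost] using key) (tge_refl K τ _)


/-- For every strongly monotonic functional `F` of type `σ ⇒ τ` and every `x`
in the interpretation of `σ`: `cost τ (F x) ≥ cost σ x`. -/
theorem cost_apply_ge {S : Type} (K : S → ℕ) (σ τ : Ty S)
    (F : Interp K (Ty.arrow σ τ)) (hF : Mem K (Ty.arrow σ τ) F)
    (x : Interp K σ) (hx : Mem K σ x) :
    cost K σ x ≤ cost K τ (F x) := by
  have := cost_add_aux K σ τ (tge_self_addcost K σ) F hF x hx
  omega
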